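/- For every IFOM-structure 𝔐, the intuitionistic neighbourhood model 𝔐• is Cartesian, i.e. it is both R~-Cartesian and N-Cartesian. -/
import Mathlib


/-
Common formalisation of the syntax and semantics of the intuitionistic
monotone modal logic IM, its generalised Hilbert calculi, intuitionistic
neighbourhood models, IFOM-structures, and related constructions.
-/

namespace IMPaper

/-- Formulas of the monotone modal language L. -/
inductive Formula : Type
  | prop : ℕ → Formula
  | bot  : Formula
  | and  : Formula → Formula → Formula
  | or   : Formula → Formula → Formula
  | imp  : Formula → Formula → Formula
  | box  : Formula → Formula
  | dia  : Formula → Formula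
deriving DecidableEq

/-- Negation: ¬φ abbreviates φ → ⊥. -/
def Formula.neg (φ : Formula) : Formula := φ.imp .bot

/-- Top: ⊤ abbreviates ⊥ → ⊥. -/
def Formula.top : Formula := Formula.bot.imp .bot

/-- Substitution of formulas for proposition letters. -/
def Formula.subst (σ : ℕ → Formula) : Formula → Formula
  | .prop i   => σ i
  | .bot      => .bot
  | .and φ ψ  => .and (φ.subst σ) (ψ.subst σ)
  | .or φ ψ   => .or (φ.subst σ) (ψ.subst σ)
  | .imp φ ψ  => .imp (φ.subst σ) (ψ.subst σ)
  | .box φ    => .box (φ.subst σ)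
  | .dia φ    => .dia (φ.subst σ)

private def pp0 : Formula := .prop 0
private def pp1 : Formula := .prop 1
private def pp2 : Formula := .prop 2

/-- A standard axiomatisation of intuitionistic propositional logic. -/
def IpcAx : Set Formula :=
  { Formula.imp pp0 (.imp pp1 pp0),
    Formula.imp (.imp pp0 (.imp pp1 pp2)) (.imp (.imp pp0 pp1) (.imp pp0 pp2)),
    Formula.imp (.and pp0 pp1) pp0,
    Formula.imp (.and pp0 pp1) pp1,
    Formula.imp pp0 (.imp pp1 (.and pp0 pp1)),
    Formula.imp pp0 (.or pp0 pp1),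
    Formula.imp pp1 (.or pp0 pp1),
    Formula.imp (.imp pp0 pp2) (.imp (.imp pp1 pp2) (.imp (.or pp0 pp1) pp2)),
    Formula.imp .bot pp0 }

/-- All substitution instances of a set of formulas. -/
def Instances (Ax : Set Formula) : Set Formula :=
  {φ | ∃ ψ ∈ Ax, ∃ σ, φ = ψ.subst σ}

/-- 𝒜x: all substitution instances of Ax together with all substitution
instances of the axioms of intuitionistic propositional logic. -/
def ScrAx (Ax : Set Formula) : Set Formula := Instances Ax ∪ Instances IpcAx

/-- The generalised Hilbert calculus GHC(Ax). -/
inductive GHC (Ax : Set Formula) : Set Formula → Formula → Prop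
  | el {Γ : Set Formula} {φ : Formula} : φ ∈ Γ → GHC Ax Γ φ
  | ax {Γ : Set Formula} {φ : Formula} : φ ∈ ScrAx Ax → GHC Ax Γ φ
  | mp {Γ : Set Formula} {φ ψ : Formula} :
      GHC Ax Γ φ → GHC Ax Γ (φ.imp ψ) → GHC Ax Γ ψ
  | monBox {Γ : Set Formula} {φ ψ : Formula} :
      GHC Ax ∅ (φ.imp ψ) → GHC Ax Γ ((Formula.box φ).imp (Formula.box ψ))
  | monDia {Γ : Set Formula} {φ ψ : Formula} :
      GHC Ax ∅ (φ.imp ψ) → GHC Ax Γ ((Formula.dia φ).imp (Formula.dia ψ))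

/-- The axioms (neg_a) and (I_◇) of the calculus IMCalc. -/
def IMAx : Set Formula :=
  { Formula.imp ((Formula.box pp0).and (Formula.dia pp0.neg)) .bot,
    Formula.imp ((Formula.box Formula.top).imp (Formula.dia pp0)) (Formula.dia pp0) }

/-- Derivability in the calculus IMCalc = GHC({(□p ∧ ◇¬p) → ⊥, (□⊤ → ◇p) → ◇p}). -/
def IMC : Set Formula → Formula → Prop := GHC IMAx

/-- An intuitionistic neighbourhood: a partial function W ⇀ 𝒫(W), encoded as a
domain together with a (total) value function whose values matter on the domain. -/
structure Nbhd (W : Type) where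
  dom : Set W
  val : W → Set W

/-- The data of an intuitionistic neighbourhood model. -/
structure INStruct (W : Type) where
  le : W → W → Prop
  N : Set (Nbhd W)
  V : ℕ → Set W

variable {W W' : Type}

/-- A set is upward closed w.r.t. the order of the structure. -/
def INStruct.Up (M : INStruct W) (s : Set W) : Prop :=
  ∀ ⦃w v : W⦄, M.le w v → w ∈ s → v ∈ s

/-- `M` is an intuitionistic neighbourhood model: the order is a partial order,
the domain of every neighbourhood is upward closed, and the valuation assigns
upward closed sets to proposition letters. -/
def INStruct.IsModel (M : INStruct W) : Prop :=
  IsPartialOrder W M.le ∧ (∀ a ∈ M.N, M.Up a.dom) ∧ ∀ i, M.Up (M.V i)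

/-- Truth of a formula at a world of an intuitionistic neighbourhood model. -/
def INStruct.sat (M : INStruct W) : Formula → W → Prop
  | .prop i, w  => w ∈ M.V i
  | .bot, _     => False
  | .and φ ψ, w => M.sat φ w ∧ M.sat ψ w
  | .or φ ψ, w  => M.sat φ w ∨ M.sat ψ w
  | .imp φ ψ, w => ∀ v, M.le w v → M.sat φ v → M.sat ψ v
  | .box φ, w   => ∃ a ∈ M.N, w ∈ a.dom ∧
      ∀ w', M.le w w' → ∀ v ∈ a.val w', M.sat φ v
  | .dia φ, w   => ∀ w', M.le w w' → ∀ a ∈ M.N, w' ∈ a.dom →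
      ∃ v ∈ a.val w', M.sat φ v

/-- Semantic consequence over the class of all intuitionistic neighbourhood models. -/
def INConseq (Γ : Set Formula) (φ : Formula) : Prop :=
  ∀ (W : Type) (M : INStruct W), M.IsModel →
    ∀ w : W, (∀ ψ ∈ Γ, M.sat ψ w) → M.sat φ w

/-- A coherent intuitionistic neighbourhood: conditions (N1) and (N2). -/
def INStruct.CoherentNbhd (M : INStruct W) (a : Nbhd W) : Prop :=
  (∀ ⦃w w' : W⦄, M.le w w' → w ∈ a.dom → ∀ v ∈ a.val w, ∃ v' ∈ a.val w', M.le v v') ∧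
  (∀ ⦃w : W⦄, w ∈ a.dom → ∀ v ∈ a.val w, ∀ v', M.le v v' →
      ∃ w', M.le w w' ∧ v' ∈ a.val w')

/-- A model is coherent if all its intuitionistic neighbourhoods are coherent. -/
def INStruct.Coherent (M : INStruct W) : Prop := ∀ a ∈ M.N, M.CoherentNbhd a

/-- Semantic consequence over the class of coherent intuitionistic neighbourhood models. -/
def CohConseq (Γ : Set Formula) (φ : Formula) : Prop :=
  ∀ (W : Type) (M : INStruct W), M.IsModel → M.Coherent →
    ∀ w : W, (∀ ψ ∈ Γ, M.sat ψ w) → M.sat φ w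

/-- The relation R: w R v iff v ∈ a(w) for some neighbourhood a of w. -/
def INStruct.R (M : INStruct W) (w v : W) : Prop :=
  ∃ a ∈ M.N, w ∈ a.dom ∧ v ∈ a.val w

/-- R~-Cartesian: w ≤~ v R~ w implies w = v (with ~ the equivalence closures). -/
def INStruct.RCartesian (M : INStruct W) : Prop :=
  ∀ w v, Relation.EqvGen M.le w v → Relation.EqvGen M.R v w → w = v

/-- N-Cartesian: w R~ v and w, v ∈ dom(a) imply a(w) = a(v). -/
def INStruct.NCartesian (M : INStruct W) : Prop :=
  ∀ a ∈ M.N, ∀ w v, Relation.EqvGen M.R w v → w ∈ a.dom → v ∈ a.dom →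
    a.val w = a.val v

/-- Cartesian: both R~-Cartesian and N-Cartesian. -/
def INStruct.Cartesian (M : INStruct W) : Prop := M.RCartesian ∧ M.NCartesian

/-- Isomorphism of intuitionistic neighbourhood structures. -/
def Isomorphic (M : INStruct W) (M' : INStruct W') : Prop :=
  ∃ (α : W → W') (ν : Nbhd W → Nbhd W'),
    Function.Bijective α ∧ Set.BijOn ν M.N M'.N ∧
    (∀ w v, M.le w v ↔ M'.le (α w) (α v)) ∧
    (∀ a ∈ M.N, ∀ w, w ∈ a.dom ↔ α w ∈ (ν a).dom) ∧
    (∀ a ∈ M.N, ∀ u ∈ a.dom, ∀ w, w ∈ a.val u ↔ α w ∈ (ν a).val (α u)) ∧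
    (∀ i w, w ∈ M.V i ↔ α w ∈ M'.V i)

end IMPaper
namespace IMPaper

variable {W S A : Type}

/-- The data of an IFOM-structure (two-sorted intuitionistic first-order structure). -/
structure IFOMStruct (W S A : Type) where
  le : W → W → Prop
  Is : W → Set S
  In : W → Set A
  rN : W → S → A → Prop
  rE : W → A → S → Prop
  IP : ℕ → W → Set S

/-- `F` is an IFOM-structure: the order is a partial order, the predicates are
typed by the sort interpretations, and all interpretations increase along ≤. -/
def IFOMStruct.IsIFOM (F : IFOMStruct W S A) : Prop :=
  IsPartialOrder W F.le ∧
  (∀ ⦃w w'⦄, F.le w w' → F.Is w ⊆ F.Is w') ∧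
  (∀ ⦃w w'⦄, F.le w w' → F.In w ⊆ F.In w') ∧
  (∀ ⦃w w'⦄, F.le w w' → ∀ x a, F.rN w x a → F.rN w' x a) ∧
  (∀ ⦃w w'⦄, F.le w w' → ∀ a x, F.rE w a x → F.rE w' a x) ∧
  (∀ i ⦃w w'⦄, F.le w w' → F.IP i w ⊆ F.IP i w') ∧
  (∀ w x a, F.rN w x a → x ∈ F.Is w ∧ a ∈ F.In w) ∧
  (∀ w a x, F.rE w a x → a ∈ F.In w ∧ x ∈ F.Is w) ∧
  (∀ i w, F.IP i w ⊆ F.Is w)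

/-- Interpretation of L-formulas at a pair (w, x) of an IFOM-structure. -/
def IFOMStruct.sat (F : IFOMStruct W S A) : Formula → W → S → Prop
  | .prop i, w, x  => x ∈ F.IP i w
  | .bot, _, _     => False
  | .and φ ψ, w, x => F.sat φ w x ∧ F.sat ψ w x
  | .or φ ψ, w, x  => F.sat φ w x ∨ F.sat ψ w x
  | .imp φ ψ, w, x => ∀ w', F.le w w' → F.sat φ w' x → F.sat ψ w' x
  | .box φ, w, x   => ∃ a, a ∈ F.In w ∧ F.rN w x a ∧
      ∀ w', F.le w w' → ∀ x', x' ∈ F.Is w' → F.rE w' a x' → F.sat φ w' x'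
  | .dia φ, w, x   => ∀ w', F.le w w' → ∀ a', a' ∈ F.In w' → F.rN w' x a' →
      ∃ y', y' ∈ F.Is w' ∧ F.rE w' a' y' ∧ F.sat φ w' y'

/-- Semantic consequence over the class of all IFOM-structures. -/
def IFOMConseq (Γ : Set Formula) (φ : Formula) : Prop :=
  ∀ (W S A : Type) (F : IFOMStruct W S A), F.IsIFOM →
    ∀ (w : W) (x : S), x ∈ F.Is w → (∀ ψ ∈ Γ, F.sat ψ w x) → F.sat φ w x

/-- The carrier W• of the induced intuitionistic neighbourhood model 𝔐•. -/
def IFOMStruct.BullW (F : IFOMStruct W S A) : Type := {p : W × S // p.2 ∈ F.Is p.1}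

/-- The intuitionistic neighbourhood a• induced by an element a of sort n. -/
def IFOMStruct.bullNbhd (F : IFOMStruct W S A) (a : A) : Nbhd F.BullW where
  dom := {p | a ∈ F.In p.1.1 ∧ F.rN p.1.1 p.1.2 a}
  val := fun p => {q | q.1.1 = p.1.1 ∧ F.rE p.1.1 a q.1.2}

/-- The intuitionistic neighbourhood model 𝔐• induced by an IFOM-structure 𝔐. -/
def IFOMStruct.bull (F : IFOMStruct W S A) : INStruct F.BullW where
  le := fun p q => F.le p.1.1 q.1.1 ∧ p.1.2 = q.1.2
  N := {b | ∃ w, ∃ a ∈ F.In w, b = F.bullNbhd a}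
  V := fun i => {p | p.1.2 ∈ F.IP i p.1.1}

end IMPaper
namespace IMPaper

/-- for every IFOM-structure 𝔐, the model 𝔐• is Cartesian,
i.e. both R~-Cartesian and N-Cartesian. -/
theorem bull_cartesian {W S A : Type} (F : IFOMStruct W S A) (hF : F.IsIFOM) :
    F.bull.Cartesian := by
  have hR : ∀ p q : F.BullW, F.bull.R p q → p.1.1 = q.1.1 := by
    rintro p q ⟨b, ⟨w, a, _, rfl⟩, _, hval⟩
    exact hval.1.symm
  have hReqv : ∀ p q : F.BullW, Relation.EqvGen F.bull.R p q → p.1.1 = q.1.1 := by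
    intro p q h
    induction h with
    | rel _ _ h => exact hR _ _ h
    | refl => rfl
    | symm _ _ _ ih => exact ih.symm
    | trans _ _ _ _ _ ih1 ih2 => exact ih1.trans ih2
  have hLeqv : ∀ p q : F.BullW, Relation.EqvGen F.bull.le p q → p.1.2 = q.1.2 := by
    intro p q h
    induction h with
    | rel _ _ h => exact h.2
    | refl => rfl
    | symm _ _ _ ih => exact ih.symm
    | trans _ _ _ _ _ ih1 ih2 => exact ih1.trans ih2
  constructor
  · intro p q hle hr
    have h1 := hReqv _ _ hr
    have h2 := hLeqv _ _ hle
    exact Subtype.ext (Prod.ext h1.symm h2)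
  · rintro b ⟨w, a, _, rfl⟩ p q hpq _ _
    have h := hReqv _ _ hpq
    ext r
    simp only [IFOMStruct.bullNbhd, Set.mem_setOf_eq, h]

end IMPaper
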